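/- If A is a G-injective G-C*-algebra, then the injective crossed product coincides with the maximal crossed product: A⋊_inj G = A⋊_max G, i.e. ‖a‖_inj = ‖a‖_max for every a ∈ C_c(G,A). -/

import Mathlib

open Function

/-- A point-norm continuous action of a topological group `G` on a (non-unital) C⋆-algebra `A`
by ⋆-automorphisms. -/
structure GAct (G : Type) [Monoid G] [TopologicalSpace G]
    (A : Type) [NonUnitalCStarAlgebra A] : Type where
  act : G → A → A
  act_one : ∀ a, act 1 a = a
  act_mul : ∀ g h a, act (g * h) a = act g (act h a)
  map_add : ∀ g a b, act g (a + b) = act g a + act g b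
  map_smul : ∀ g (c : ℂ) a, act g (c • a) = c • act g a
  map_mul : ∀ g a b, act g (a * b) = act g a * act g b
  map_star : ∀ g a, act g (star a) = star (act g a)
  isometry : ∀ g a, ‖act g a‖ = ‖a‖
  cont : ∀ a, Continuous fun g => act g a

section maps

variable {G : Type} [Monoid G] [TopologicalSpace G]
variable {A B : Type} [NonUnitalCStarAlgebra A] [NonUnitalCStarAlgebra B]

/-- A contractive completely positive (ccp) map between C⋆-algebras:
linear, contractive, and positive at all matrix levels (where an element of a
C⋆-algebra is positive iff it is of the form `star y * y`). -/
def IsCcp (φ : A → B) : Prop :=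
  (∀ a b, φ (a + b) = φ a + φ b) ∧ (∀ (c : ℂ) (a : A), φ (c • a) = c • φ a) ∧
  (∀ a, ‖φ a‖ ≤ ‖a‖) ∧
  ∀ (n : ℕ) (M : Matrix (Fin n) (Fin n) A),
    (∃ N : Matrix (Fin n) (Fin n) A, M = star N * N) →
      ∃ N' : Matrix (Fin n) (Fin n) B, M.map φ = star N' * N'

/-- A ⋆-homomorphism, as a predicate on functions. -/
def IsStarHom (φ : A → B) : Prop :=
  (∀ a b, φ (a + b) = φ a + φ b) ∧ (∀ (c : ℂ) (a : A), φ (c • a) = c • φ a) ∧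
  (∀ a b, φ (a * b) = φ a * φ b) ∧ (∀ a, φ (star a) = star (φ a))

/-- Equivariance of a map with respect to given actions. -/
def Equivariant (α : GAct G A) (β : GAct G B) (φ : A → B) : Prop :=
  ∀ g a, φ (α.act g a) = β.act g (φ a)

/-- A `G`-equivariant injective ⋆-homomorphism (an equivariant embedding). -/
def IsGEmbedding (α : GAct G A) (β : GAct G B) (φ : A → B) : Prop :=
  IsStarHom φ ∧ Injective φ ∧ Equivariant α β φ

/-- A map `φ : A → B` is `G`-injective if it extends to an equivariant ccp map along every
equivariant embedding of `A` into another `G`-C⋆-algebra. -/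
def GInjectiveMap (α : GAct G A) (β : GAct G B) (φ : A → B) : Prop :=
  ∀ (C : Type) (_ : NonUnitalCStarAlgebra C) (γ : GAct G C) (ι : A → C),
    IsGEmbedding α γ ι →
    ∃ ψ : C → B, IsCcp ψ ∧ Equivariant γ β ψ ∧ ψ ∘ ι = φ

/-- A `G`-C⋆-algebra `B` is `G`-injective if every equivariant ccp map into it is
`G`-injective. -/
def GInjectiveAlg (β : GAct G B) : Prop :=
  ∀ (A' : Type) (_ : NonUnitalCStarAlgebra A') (α : GAct G A') (φ : A' → B),
    IsCcp φ → Equivariant α β φ → GInjectiveMap α β φ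

/-- Membership in the algebraic crossed product `C_c(G,A)`: continuous compactly
supported `A`-valued functions on `G`. -/
def CcFun (f : G → A) : Prop :=
  Continuous f ∧ HasCompactSupport f

end maps

section norms

variable (G : Type) [Monoid G] [TopologicalSpace G]

/-- The type of assignments of a crossed-product norm (such as `‖·‖_max` or `‖·‖_r`) to every
`G`-C⋆-algebra; the norm is recorded as a function on all of `G → A`, thought of as restricted
to `C_c(G,A)`. -/
abbrev CPNorm : Type 1 :=
  ∀ (A : Type) [_inst : NonUnitalCStarAlgebra A], GAct G A → (G → A) → ℝ

variable {G}

/-- Functoriality of a crossed-product norm assignment for equivariant ccp maps: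
an equivariant ccp map `ψ` induces a contraction on crossed products.  This is the
characteristic property of the maximal crossed product (functoriality for ccp maps)
which is used throughout the construction of the maximal injective crossed product. -/
def CcpFunctorial (N : CPNorm G) : Prop :=
  ∀ (A : Type) (_ : NonUnitalCStarAlgebra A) (B : Type) (_ : NonUnitalCStarAlgebra B)
    (α : GAct G A) (β : GAct G B) (ψ : A → B), IsCcp ψ → Equivariant α β ψ →
    ∀ f : G → A, CcFun f → N B β (ψ ∘ f) ≤ N A α f

/-- The injective crossed-product norm associated to a given (maximal) crossed-product
norm assignment: the infimum over all equivariant embeddings `ι : A → B` of the norm of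
the image of `f ∈ C_c(G,A)` in `B ⋊_max G`. -/
noncomputable def injNorm (maxN : CPNorm G) (A : Type) [NonUnitalCStarAlgebra A]
    (α : GAct G A) (f : G → A) : ℝ :=
  sInf { r : ℝ | ∃ (B : Type) (_ : NonUnitalCStarAlgebra B) (β : GAct G B) (ι : A → B),
    IsGEmbedding α β ι ∧ r = maxN B β (ι ∘ f) }

end norms

/-! Extending the identity of a `G`-injective `A` along an equivariant embedding `ι : A → B`
gives an equivariant ccp retraction `ψ : B → A`; by ccp-functoriality of the maximal norm,
`‖f‖_max = ‖ψ ∘ ι ∘ f‖_max ≤ ‖ι ∘ f‖_max`, so the infimum defining `‖f‖_inj` is attained at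
the identity embedding. -/

open scoped CStarAlgebra

section lemmas

variable {G : Type} [TopologicalSpace G]
variable {A B : Type} [NonUnitalCStarAlgebra A] [NonUnitalCStarAlgebra B]

def IsStarHom.toNonUnitalStarAlgHom {ι : A → B} (h : IsStarHom ι) : A →⋆ₙₐ[ℂ] B where
  toFun := ι
  map_add' := h.1
  map_smul' := h.2.1
  map_mul' := h.2.2.1
  map_star' := h.2.2.2
  map_zero' := by simpa using h.2.1 0 0

theorem CcFun.comp_isStarHom {f : G → A} {ι : A → B} (hf : CcFun f) (hι : IsStarHom ι) :
    CcFun (ι ∘ f) :=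
  ⟨(map_continuous hι.toNonUnitalStarAlgHom).comp hf.1,
    hf.2.comp_left (map_zero hι.toNonUnitalStarAlgHom)⟩

variable [Monoid G]

theorem isCcp_id : IsCcp (id : A → A) :=
  ⟨fun _ _ => rfl, fun _ _ => rfl, fun _ => le_rfl, fun _ M ⟨N, hN⟩ => ⟨N, by simpa using hN⟩⟩

theorem isGEmbedding_id (α : GAct G A) : IsGEmbedding α α id :=
  ⟨⟨fun _ _ => rfl, fun _ _ => rfl, fun _ _ => rfl, fun _ => rfl⟩, injective_id, fun _ _ => rfl⟩

theorem GInjectiveAlg.exists_ccp_retraction {α : GAct G A} (hA : GInjectiveAlg α)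
    {β : GAct G B} {ι : A → B} (hι : IsGEmbedding α β ι) :
    ∃ ψ : B → A, IsCcp ψ ∧ Equivariant β α ψ ∧ ψ ∘ ι = id :=
  hA A inferInstance α id isCcp_id (fun _ _ => rfl) B inferInstance β ι hι

theorem CcpFunctorial.le_of_isGEmbedding {N : CPNorm G} (hN : CcpFunctorial N)
    {α : GAct G A} (hA : GInjectiveAlg α) {β : GAct G B} {ι : A → B}
    (hι : IsGEmbedding α β ι) {f : G → A} (hf : CcFun f) : N A α f ≤ N B β (ι ∘ f) := by
  obtain ⟨ψ, hψ, hψequiv, hψι⟩ := hA.exists_ccp_retraction hι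
  have hcontract := hN B inferInstance A inferInstance β α ψ hψ hψequiv (ι ∘ f)
    (hf.comp_isStarHom hι.1)
  rwa [← comp_assoc, hψι, id_comp] at hcontract

theorem injNorm_eq_of_forall_le {N : CPNorm G} {α : GAct G A} {f : G → A}
    (hle : ∀ (B : Type) [NonUnitalCStarAlgebra B] (β : GAct G B) (ι : A → B),
      IsGEmbedding α β ι → N A α f ≤ N B β (ι ∘ f)) :
    injNorm N A α f = N A α f := by
  refine IsLeast.csInf_eq ⟨⟨A, inferInstance, α, id, isGEmbedding_id α, rfl⟩, ?_⟩
  rintro r ⟨B, _, β, ι, hι, rfl⟩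
  exact hle B β ι hι

end lemmas

theorem injNorm_eq_maxNorm_of_G_injective_general
    {G : Type} [Group G] [TopologicalSpace G]
    (maxN : CPNorm G) (hmax : CcpFunctorial maxN)
    {A : Type} [NonUnitalCStarAlgebra A] (α : GAct G A)
    (hA : GInjectiveAlg α) :
    ∀ f : G → A, CcFun f → injNorm maxN A α f = maxN A α f :=
  fun _ hf => injNorm_eq_of_forall_le fun _ _ _ _ hι => hmax.le_of_isGEmbedding hA hι hf

/-- If `A` is a `G`-injective `G`-C⋆-algebra, then the injective
crossed-product norm coincides with the maximal one: `A ⋊_inj G = A ⋊_max G`, i.e.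
`‖a‖_inj = ‖a‖_max` for every `a ∈ C_c(G,A)`. -/
theorem injNorm_eq_maxNorm_of_G_injective
    {G : Type} [Group G] [TopologicalSpace G] [IsTopologicalGroup G] [LocallyCompactSpace G]
    (maxN : CPNorm G) (hmax : CcpFunctorial maxN)
    {A : Type} [NonUnitalCStarAlgebra A] (α : GAct G A)
    (hA : GInjectiveAlg α) :
    ∀ f : G → A, CcFun f → injNorm maxN A α f = maxN A α f :=
  injNorm_eq_maxNorm_of_G_injective_general maxN hmax α hA
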